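/- For all integers 2 ≤ t ≤ n, the induced matching number of the t-path simplicial tree of the path graph P_n satisfies ν₁(Γ_{n,t}) = ⌈(n − t + 1)/(t + 1)⌉. -/

import Mathlib

noncomputable section

open Finset MvPolynomial

/-- A simplicial complex on the vertex type `V`: a finite, nonempty collection of
finite subsets of `V` that is closed under taking subsets. -/
structure SimplicialComplex (V : Type) [DecidableEq V] : Type where
  faces : Finset (Finset V)
  nonempty' : faces.Nonempty
  down_closed : ∀ ⦃F G : Finset V⦄, F ∈ faces → G ⊆ F → G ∈ faces

namespace SimplicialComplex

variable {V : Type} [DecidableEq V]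

open scoped Classical in
/-- The facets: the maximal faces with respect to inclusion. -/
def facets (Δ : SimplicialComplex V) : Finset (Finset V) :=
  Δ.faces.filter fun F => ∀ G ∈ Δ.faces, F ⊆ G → F = G

/-- A matching: a set of pairwise disjoint facets. -/
def IsMatching (Δ : SimplicialComplex V) (M : Finset (Finset V)) : Prop :=
  M ⊆ Δ.facets ∧ ∀ F ∈ M, ∀ G ∈ M, F ≠ G → F ∩ G = ∅

/-- The matching number `ν(Δ)`: the maximum cardinality of a matching. -/
def matchingNumber (Δ : SimplicialComplex V) : ℕ :=
  sSup {r : ℕ | ∃ M : Finset (Finset V), Δ.IsMatching M ∧ M.card = r}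

/-- `F` is a leaf of the subcomplex generated by the facet set `S`: either `F` is
the only facet, or there is another facet `G` with `H ∩ F ⊆ G ∩ F` for all
facets `H ≠ F`. -/
def IsLeafIn (S : Finset (Finset V)) (F : Finset V) : Prop :=
  F ∈ S ∧ (S = {F} ∨ ∃ G ∈ S, G ≠ F ∧ ∀ H ∈ S, H ≠ F → H ∩ F ⊆ G ∩ F)

/-- A simplicial forest: every nonempty subcomplex has a leaf (equivalently,
every connected component is a simplicial tree). -/
def IsForest (Δ : SimplicialComplex V) : Prop :=
  ∀ S ⊆ Δ.facets, S.Nonempty → ∃ F, IsLeafIn S F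

/-- Connectedness: any two facets are joined by a chain of facets in which
consecutive facets intersect nontrivially. -/
def Connected (Δ : SimplicialComplex V) : Prop :=
  ∀ F ∈ Δ.facets, ∀ G ∈ Δ.facets,
    Relation.ReflTransGen
      (fun A B => A ∈ Δ.facets ∧ B ∈ Δ.facets ∧ (A ∩ B).Nonempty) F G

/-- A simplicial tree: a connected simplicial forest. -/
def IsTree (Δ : SimplicialComplex V) : Prop := Δ.Connected ∧ Δ.IsForest

/-- A good leaf: a facet which is a leaf of every subcomplex containing it. -/
def IsGoodLeaf (Δ : SimplicialComplex V) (F : Finset V) : Prop :=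
  F ∈ Δ.facets ∧ ∀ S ⊆ Δ.facets, F ∈ S → IsLeafIn S F

/-- Two disjoint facets `F`, `G` form a gap: the induced subcomplex on `F ∪ G`
has facet set exactly `{F, G}`. -/
def FormGap (Δ : SimplicialComplex V) (F G : Finset V) : Prop :=
  F ∈ Δ.facets ∧ G ∈ Δ.facets ∧ F ∩ G = ∅ ∧
    ∀ H ∈ Δ.facets, H ⊆ F ∪ G → H = F ∨ H = G

/-- A restricted matching: a matching one of whose facets forms a gap with every
other facet of the matching. -/
def IsRestrictedMatching (Δ : SimplicialComplex V) (M : Finset (Finset V)) : Prop :=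
  Δ.IsMatching M ∧ ∃ F ∈ M, ∀ G ∈ M, G ≠ F → Δ.FormGap F G

/-- The restricted matching number `ν₀(Δ)`. -/
def restrictedMatchingNumber (Δ : SimplicialComplex V) : ℕ :=
  sSup {r : ℕ | ∃ M : Finset (Finset V), Δ.IsRestrictedMatching M ∧ M.card = r}

/-- An induced matching: a matching `M` such that the facets contained in the
union of the members of `M` are exactly the members of `M`. -/
def IsInducedMatching (Δ : SimplicialComplex V) (M : Finset (Finset V)) : Prop :=
  Δ.IsMatching M ∧ ∀ H ∈ Δ.facets, H ⊆ M.biUnion id → H ∈ M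

/-- The induced matching number `ν₁(Δ)`. -/
def inducedMatchingNumber (Δ : SimplicialComplex V) : ℕ :=
  sSup {r : ℕ | ∃ M : Finset (Finset V), Δ.IsInducedMatching M ∧ M.card = r}

/-- A proper chain of length `n` between the facets `F` and `G`. -/
def ProperChain (Δ : SimplicialComplex V) (F G : Finset V) (n : ℕ) : Prop :=
  ∃ c : ℕ → Finset V, c 0 = F ∧ c n = G ∧ (∀ i ≤ n, c i ∈ Δ.facets) ∧
    ∀ i < n, (c i ∩ c (i + 1)).card = (c (i + 1)).card - 1

/-- The distance between two facets: the minimal length of a proper chain. -/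
def dist (Δ : SimplicialComplex V) (F G : Finset V) : ℕ :=
  sInf {n : ℕ | Δ.ProperChain F G n}

/-- The intersection property for a pure complex whose facets have cardinality
`t` (`= d + 1`): it is connected in codimension 1, and any two facets `F`, `G`
with `|F ∩ G| = t - k` (`1 ≤ k ≤ t`) satisfy `dist(F, G) = k`. -/
def HasIntersectionProperty (Δ : SimplicialComplex V) (t : ℕ) : Prop :=
  (∀ F ∈ Δ.facets, F.card = t) ∧
    (∀ F ∈ Δ.facets, ∀ G ∈ Δ.facets, ∃ n, Δ.ProperChain F G n) ∧
    ∀ F ∈ Δ.facets, ∀ G ∈ Δ.facets, ∀ k, 1 ≤ k → k ≤ t →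
      (F ∩ G).card = t - k → Δ.dist F G = k

end SimplicialComplex

/-- The simplicial complex generated by a finite family of faces. -/
def ofFacets {V : Type} [DecidableEq V] (ℱ : Finset (Finset V)) :
    SimplicialComplex V where
  faces := insert ∅ (ℱ.biUnion Finset.powerset)
  nonempty' := ⟨∅, Finset.mem_insert_self _ _⟩
  down_closed := by
    intro F G hF hGF
    rcases Finset.mem_insert.mp hF with h | h
    · subst h
      exact Finset.mem_insert.mpr <| Or.inl (Finset.subset_empty.mp hGF)
    · rcases Finset.mem_biUnion.mp h with ⟨A, hA, hFA⟩
      exact Finset.mem_insert.mpr <| Or.inr <| Finset.mem_biUnion.mpr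
        ⟨A, hA, Finset.mem_powerset.mpr (hGF.trans (Finset.mem_powerset.mp hFA))⟩

/-- The ideal of `K[x_v : v ∈ V]` generated by the products
`x_{F₁} ⋯ x_{F_k}` over all `k`-matchings `{F₁, …, F_k}` taken from the facet
set `ℱ`.  For `ℱ = ℱ(Δ)` this is the `k`-th squarefree power `I(Δ)^{[k]}` of the
facet ideal `I(Δ)` (and the facet ideal itself for `k = 1`). -/
def matchPow (K : Type) [Field K] {V : Type} [DecidableEq V]
    (ℱ : Finset (Finset V)) (k : ℕ) : Ideal (MvPolynomial V K) :=
  Ideal.span {p | ∃ M : Finset (Finset V), M ⊆ ℱ ∧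
    (∀ F ∈ M, ∀ G ∈ M, F ≠ G → F ∩ G = ∅) ∧ M.card = k ∧
    p = ∏ F ∈ M, ∏ v ∈ F, (X v : MvPolynomial V K)}

/-- The `k`-th squarefree power `I(Δ)^{[k]}` of the facet ideal of `Δ`. -/
def sqfreePower (K : Type) [Field K] {V : Type} [DecidableEq V]
    (Δ : SimplicialComplex V) (k : ℕ) : Ideal (MvPolynomial V K) :=
  matchPow K Δ.facets k

/-- `p` is a monomial with coefficient `1`. -/
def IsMonomialOne {K : Type} [Field K] {V : Type} (p : MvPolynomial V K) : Prop :=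
  ∃ d : V →₀ ℕ, p = monomial d 1

/-- `u` is a minimal monomial generator of the monomial ideal `I`: `u` is a
monomial of `I` which is not strictly divisible by any monomial of `I`. -/
def IsMinGen {K : Type} [Field K] {V : Type} (I : Ideal (MvPolynomial V K))
    (u : MvPolynomial V K) : Prop :=
  IsMonomialOne u ∧ u ∈ I ∧
    ∀ v : MvPolynomial V K, IsMonomialOne v → v ∈ I → v ∣ u → v = u

/-- A monomial ideal `I` has linear quotients: its minimal monomial generators
can be listed as `f₁, …, f_m` so that each colon ideal
`(f₁, …, f_{i-1}) : (f_i)` is generated by a subset of the variables. -/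
def HasLinearQuotients {K : Type} [Field K] {V : Type}
    (I : Ideal (MvPolynomial V K)) : Prop :=
  ∃ L : List (MvPolynomial V K), L.Nodup ∧ (∀ u, u ∈ L ↔ IsMinGen I u) ∧
    ∀ i : ℕ, ∀ hi : i < L.length, 1 ≤ i →
      ∃ s : Set V,
        Submodule.colon (Ideal.span {q | q ∈ L.take i}) (Ideal.span {L.get ⟨i, hi⟩}) =
          Ideal.span ((fun v => (X v : MvPolynomial V K)) '' s)

/-- The degree of the monomial with exponent vector `d`. -/
def degOf {V : Type} (d : V →₀ ℕ) : ℕ := d.sum fun _ n => n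

/-- The edge relation of the induced graph `G_I^{(u,v)}` of Bigdeli–Herzog–Zheng,
for a monomial ideal `I` generated in degree `d`, where `m` is the exponent
vector of `lcm(u, v)`: two minimal monomial generators (identified with their
exponent vectors) dividing `lcm(u, v)` are adjacent when their lcm has degree
`d + 1`. -/
def EdgeRel (K : Type) [Field K] {V : Type} [DecidableEq V]
    (I : Ideal (MvPolynomial V K)) (d : ℕ) (m : V →₀ ℕ) (u v : V →₀ ℕ) : Prop :=
  IsMinGen I (monomial u (1 : K)) ∧ IsMinGen I (monomial v (1 : K)) ∧
    u ≤ m ∧ v ≤ m ∧ degOf (u ⊔ v) = d + 1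

/-- The combinatorial criterion of Bigdeli–Herzog–Zheng for a monomial ideal `I`
generated in degree `d` to be linearly related: any two minimal monomial
generators `u`, `v` are connected by a path in `G_I^{(u,v)}`. -/
def LinearlyRelatedVia (K : Type) [Field K] {V : Type} [DecidableEq V]
    (I : Ideal (MvPolynomial V K)) (d : ℕ) : Prop :=
  ∀ a b : V →₀ ℕ, IsMinGen I (monomial a (1 : K)) → IsMinGen I (monomial b (1 : K)) →
    Relation.ReflTransGen (EdgeRel K I d (a ⊔ b)) a b

/-- The `t`-path simplicial tree `Γ_{n,t}` of the path graph `P_n` on the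
vertices `1, …, n`: its facets are the intervals `F_i = {i, …, i + t - 1}` for
`1 ≤ i ≤ n - t + 1`. -/
def pathFacets (n t : ℕ) : Finset (Finset ℕ) :=
  (Finset.Icc 1 (n - t + 1)).image fun i => Finset.Icc i (i + t - 1)

/-- The `t`-path simplicial tree `Γ_{n,t}` of the path graph `P_n`. -/
def pathComplex (n t : ℕ) : SimplicialComplex ℕ := ofFacets (pathFacets n t)

/-!
Indexing the facets `F_i = {i, …, i + t - 1}` of `Γ_{n,t}` by `i ∈ {1, …, n - t + 1}`, a family
of facets is an induced matching exactly when its indices are pairwise at least `t + 1` apart.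
A `d`-spaced subset of `{1, …, m}` has at most `⌈m / d⌉` elements, since `i ↦ ⌊(i - 1) / d⌋` is
injective on it, and `1, 1 + d, 1 + 2d, …` attains this bound.
-/

def IsSpaced (d : ℕ) (s : Finset ℕ) : Prop :=
  ∀ i ∈ s, ∀ j ∈ s, i < j → i + d ≤ j

namespace IsSpaced

variable {d m : ℕ} {s : Finset ℕ}

theorem card_le (hd : 0 < d) (hs : s ⊆ Icc 1 m) (hsp : IsSpaced d s) :
    s.card ≤ (m + d - 1) / d := by
  have div_lt : ∀ a b, a + d ≤ b → a / d < b / d := fun a b hab =>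
    calc a / d < (a + d) / d := by rw [Nat.add_div_right a hd]; exact Nat.lt_succ_self _
      _ ≤ b / d := Nat.div_le_div_right hab
  rw [← card_range ((m + d - 1) / d)]
  refine card_le_card_of_injOn (fun i => (i - 1) / d) (fun i hi => ?_) fun i hi j hj hij => ?_
  · have := mem_Icc.1 (hs hi)
    exact mem_range.2 (div_lt _ _ (by omega))
  · simp only at hij
    have := mem_Icc.1 (hs hi)
    have := mem_Icc.1 (hs hj)
    by_contra hne
    rcases lt_or_gt_of_ne hne with h | h
    · exact (div_lt (i - 1) (j - 1) (by have := hsp i hi j hj h; omega)).ne hij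
    · exact (div_lt (j - 1) (i - 1) (by have := hsp j hj i hi h; omega)).ne hij.symm

end IsSpaced

theorem exists_isSpaced_card_eq (d m : ℕ) (hd : 0 < d) :
    ∃ s ⊆ Icc 1 m, IsSpaced d s ∧ s.card = (m + d - 1) / d := by
  refine ⟨(range ((m + d - 1) / d)).image fun j => 1 + d * j, ?_, ?_, ?_⟩
  · intro x hx
    obtain ⟨j, hj, rfl⟩ := mem_image.1 hx
    have hj : d * (j + 1) ≤ m + d - 1 :=
      (Nat.mul_le_mul_left d (mem_range.1 hj)).trans (Nat.mul_div_le _ d)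
    rw [Nat.mul_succ] at hj
    rw [mem_Icc]
    omega
  · simp only [IsSpaced, mem_image, mem_range]
    rintro _ ⟨j, -, rfl⟩ _ ⟨j', -, rfl⟩ h
    have hjj' : j + 1 ≤ j' := Nat.lt_of_mul_lt_mul_left (a := d) (by omega)
    have := Nat.mul_le_mul_left d hjj'
    rw [Nat.mul_succ] at this
    omega
  · have hinj : Function.Injective fun j => 1 + d * j := fun j j' h =>
      Nat.eq_of_mul_eq_mul_left hd (by simp only at h; omega)
    rw [card_image_of_injective _ hinj, card_range]

section ofFacets

variable {V : Type} [DecidableEq V]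

theorem mem_faces_ofFacets {ℱ : Finset (Finset V)} {F : Finset V} :
    F ∈ (ofFacets ℱ).faces ↔ F = ∅ ∨ ∃ A ∈ ℱ, F ⊆ A := by
  simp [ofFacets]

theorem facets_ofFacets {ℱ : Finset (Finset V)} (hne : ℱ.Nonempty)
    (hℱ : IsAntichain (· ⊆ ·) (ℱ : Set (Finset V))) : (ofFacets ℱ).facets = ℱ := by
  classical
  ext F
  simp only [SimplicialComplex.facets, mem_filter, mem_faces_ofFacets]
  constructor
  · rintro ⟨hF, hmax⟩
    obtain ⟨A, hA⟩ := hne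
    rcases hF with rfl | ⟨A, hA, hFA⟩
    · rwa [hmax A (Or.inr ⟨A, hA, subset_rfl⟩) (empty_subset A)]
    · rwa [hmax A (Or.inr ⟨A, hA, subset_rfl⟩) hFA]
  · intro hF
    refine ⟨Or.inr ⟨F, hF, subset_rfl⟩, ?_⟩
    rintro G (rfl | ⟨A, hA, hGA⟩) hFG
    · exact subset_empty.1 hFG
    · have hFA : F = A := hℱ.eq hF hA (hFG.trans hGA)
      exact hFG.antisymm (hFA ▸ hGA)

end ofFacets

def pathFacet (t i : ℕ) : Finset ℕ := Ico i (i + t)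

theorem pathFacet_injective {t : ℕ} (ht : 0 < t) : Function.Injective (pathFacet t) := by
  intro i j h
  have hi : i ∈ pathFacet t j := h ▸ mem_Ico.2 ⟨le_rfl, by omega⟩
  have hj : j ∈ pathFacet t i := h ▸ mem_Ico.2 ⟨le_rfl, by omega⟩
  simp only [pathFacet, mem_Ico] at hi hj
  omega

theorem disjoint_pathFacet_iff {t i j : ℕ} :
    Disjoint (pathFacet t i) (pathFacet t j) ↔ i + t ≤ j ∨ j + t ≤ i := by
  rw [pathFacet, pathFacet, ← disjoint_coe, coe_Ico, coe_Ico, Set.Ico_disjoint_Ico]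
  omega

theorem mem_biUnion_image_pathFacet {t x : ℕ} {s : Finset ℕ} :
    x ∈ (s.image (pathFacet t)).biUnion id ↔ ∃ i ∈ s, i ≤ x ∧ x < i + t := by
  simp [pathFacet]

theorem facets_pathComplex (n t : ℕ) :
    (pathComplex n t).facets = (Icc 1 (n - t + 1)).image (pathFacet t) := by
  have hpath : pathFacets n t = (Icc 1 (n - t + 1)).image (pathFacet t) := by
    refine image_congr fun i hi => ?_
    have hi : 1 ≤ i := (mem_Icc.1 hi).1
    refine Icc_sub_one_right_eq_Ico_of_not_isMin ?_ i
    simp only [isMin_iff_eq_bot, Nat.bot_eq_zero]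
    omega
  rw [pathComplex, hpath]
  refine facets_ofFacets ⟨pathFacet t 1, mem_image_of_mem _ (by simp)⟩ ?_
  refine Set.Sized.isAntichain (r := t) ?_
  intro F hF
  obtain ⟨i, -, rfl⟩ := mem_image.1 hF
  simp [pathFacet]

theorem IsSpaced.isInducedMatching_pathComplex {n t : ℕ} (ht : 0 < t) {s : Finset ℕ}
    (hs : s ⊆ Icc 1 (n - t + 1)) (hsp : IsSpaced (t + 1) s) :
    (pathComplex n t).IsInducedMatching (s.image (pathFacet t)) := by
  have hfac := facets_pathComplex n t
  refine ⟨⟨hfac ▸ image_subset_image hs, ?_⟩, ?_⟩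
  · simp only [mem_image]
    rintro _ ⟨i, hi, rfl⟩ _ ⟨j, hj, rfl⟩ hne
    rw [← disjoint_iff_inter_eq_empty, disjoint_pathFacet_iff]
    rcases lt_trichotomy i j with h | rfl | h
    · have := hsp i hi j hj h; omega
    · exact absurd rfl hne
    · have := hsp j hj i hi h; omega
  · intro H hH hHsub
    obtain ⟨h, -, rfl⟩ := mem_image.1 (hfac ▸ hH)
    have cover : ∀ x, h ≤ x → x < h + t → ∃ i ∈ s, i ≤ x ∧ x < i + t := fun x hx₁ hx₂ =>
      mem_biUnion_image_pathFacet.1 (hHsub (mem_Ico.2 ⟨hx₁, hx₂⟩))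
    obtain ⟨i, hi, hih, hhi⟩ := cover h le_rfl (by omega)
    obtain rfl | hlt := hih.eq_or_lt
    · exact mem_image_of_mem _ hi
    -- otherwise `F_h` contains the vertex `i + t`, which no facet of a spaced family covers
    obtain ⟨j, hj, hji, hij⟩ := cover (i + t) (by omega) (by omega)
    exfalso
    rcases lt_trichotomy i j with h' | rfl | h'
    · have := hsp i hi j hj h'; omega
    · omega
    · have := hsp j hj i hi h'; omega

theorem isSpaced_of_isInducedMatching_pathComplex {n t : ℕ} (ht : 2 ≤ t) {s : Finset ℕ}
    (hs : s ⊆ Icc 1 (n - t + 1))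
    (hM : (pathComplex n t).IsInducedMatching (s.image (pathFacet t))) :
    IsSpaced (t + 1) s := by
  obtain ⟨⟨-, hdisj⟩, hind⟩ := hM
  have hinj := pathFacet_injective (by omega : 0 < t)
  have disj : ∀ i ∈ s, ∀ j ∈ s, i < j → i + t ≤ j := fun i hi j hj hij => by
    have := hdisj _ (mem_image_of_mem _ hi) _ (mem_image_of_mem _ hj) (hinj.ne hij.ne)
    rw [← disjoint_iff_inter_eq_empty, disjoint_pathFacet_iff] at this
    omega
  intro i hi j hj hij
  by_contra hlt
  have hj_eq : j = i + t := by have := disj i hi j hj hij; omega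
  -- then `F_{i+1} ⊆ F_i ∪ F_j` must belong to the matching, yet it meets `F_i` as `t ≥ 2`
  have hsucc : i + 1 ∈ s := by
    have hfac : pathFacet t (i + 1) ∈ (pathComplex n t).facets := by
      have := mem_Icc.1 (hs hi)
      have := mem_Icc.1 (hs hj)
      rw [facets_pathComplex n t]
      exact mem_image_of_mem _ (mem_Icc.2 ⟨by omega, by omega⟩)
    refine hinj.mem_finset_image.1 (hind _ hfac fun x hx => mem_biUnion_image_pathFacet.2 ?_)
    simp only [pathFacet, mem_Ico] at hx
    by_cases hxi : x < i + t
    · exact ⟨i, hi, by omega, hxi⟩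
    · exact ⟨j, hj, by omega, by omega⟩
  have := disj i hi (i + 1) hsucc (by omega)
  omega

theorem inducedMatchingNumber_pathComplex_general (n t : ℕ) (ht : 2 ≤ t) :
    (pathComplex n t).inducedMatchingNumber = ((n - t + 1) + (t + 1) - 1) / (t + 1) := by
  have hinj := pathFacet_injective (by omega : 0 < t)
  refine IsGreatest.csSup_eq ⟨?_, ?_⟩
  · obtain ⟨s, hs, hsp, hcard⟩ := exists_isSpaced_card_eq (t + 1) (n - t + 1) (by omega)
    exact ⟨s.image (pathFacet t), hsp.isInducedMatching_pathComplex (by omega) hs,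
      by rw [card_image_of_injective s hinj, hcard]⟩
  · rintro r ⟨M, hM, rfl⟩
    have hMfac := facets_pathComplex n t ▸ hM.1.1
    obtain ⟨s, hs, rfl⟩ := subset_image_iff.1 hMfac
    rw [card_image_of_injective s hinj]
    exact (isSpaced_of_isInducedMatching_pathComplex ht hs hM).card_le (by omega) hs

/-- `ν₁(Γ_{n,t}) = ⌈(n - t + 1) / (t + 1)⌉`, the ceiling being
written as `((n - t + 1) + (t + 1) - 1) / (t + 1)` in natural number
arithmetic. -/
theorem inducedMatchingNumber_pathComplex (n t : ℕ) (ht : 2 ≤ t) (htn : t ≤ n) :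
    (pathComplex n t).inducedMatchingNumber = ((n - t + 1) + (t + 1) - 1) / (t + 1) :=
  inducedMatchingNumber_pathComplex_general n t ht

end
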